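/- arXiv:1912.10390 — 6 statements merged into one kernel-verified Lean document; each statement's English description precedes it below -/
import Mathlib

section
/- Let X ∈ ℂ^{n×r} with 1 ≤ r ≤ n have polar decomposition X = U P, where U has orthonormal columns (U^H U = I_r) and P is Hermitian positive semidefinite. Then for any U' ∈ ℂ^{n×r} with orthonormal columns, Re(trace(U^H X)) ≥ Re(trace(U'^H X)). -/
/-!
Write `P = S * S` with `S` Hermitian. Since `U` and `U'` are isometries, `U S` and `U' S` both have
squared Frobenius norm `Re tr P = Re tr (Uᴴ X)`, while `Re tr (U'ᴴ X)` is their real inner product.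
Expanding `‖U S - U' S‖² ≥ 0` bounds that inner product by `Re tr P`.
-/

open Matrix ComplexOrder

namespace Matrix

variable {m n 𝕜 : Type*} [Fintype m] [Fintype n] [RCLike 𝕜]

lemma re_trace_conjTranspose_mul_comm (A B : Matrix m n 𝕜) :
    RCLike.re (Aᴴ * B).trace = RCLike.re (Bᴴ * A).trace := by
  rw [← RCLike.conj_re, ← RCLike.star_def, ← trace_conjTranspose, conjTranspose_mul,
    conjTranspose_conjTranspose]

lemma two_mul_re_trace_conjTranspose_mul_le (A B : Matrix m n 𝕜) :
    2 * RCLike.re (Bᴴ * A).trace ≤ RCLike.re (Aᴴ * A).trace + RCLike.re (Bᴴ * B).trace := by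
  have h := RCLike.nonneg_iff.mp (posSemidef_conjTranspose_mul_self (A - B)).trace_nonneg |>.1
  simp only [conjTranspose_sub, Matrix.sub_mul, Matrix.mul_sub, trace_sub, map_sub] at h
  linarith [re_trace_conjTranspose_mul_comm A B]

lemma conjTranspose_mul_mul_self_of_isometry [DecidableEq n] {V : Matrix m n 𝕜}
    {S : Matrix n n 𝕜} (hV : Vᴴ * V = 1) (hS : S.IsHermitian) :
    (V * S)ᴴ * (V * S) = S * S := by
  rw [conjTranspose_mul, hS.eq, Matrix.mul_assoc, ← Matrix.mul_assoc Vᴴ, hV, Matrix.one_mul]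

open scoped MatrixOrder in
lemma PosSemidef.exists_isHermitian_mul_self [DecidableEq n] {P : Matrix n n 𝕜}
    (hP : P.PosSemidef) : ∃ S : Matrix n n 𝕜, S.IsHermitian ∧ P = S * S :=
  CStarAlgebra.nonneg_iff_exists_isSelfAdjoint_and_eq_mul_self.mp hP.nonneg

lemma re_trace_conjTranspose_mul_mul_le [DecidableEq n] {V W : Matrix m n 𝕜} {P : Matrix n n 𝕜}
    (hV : Vᴴ * V = 1) (hW : Wᴴ * W = 1) (hP : P.PosSemidef) :
    RCLike.re (Wᴴ * (V * P)).trace ≤ RCLike.re P.trace := by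
  obtain ⟨S, hS, rfl⟩ := hP.exists_isHermitian_mul_self
  have h := two_mul_re_trace_conjTranspose_mul_le (V * S) (W * S)
  have hWV : ((W * S)ᴴ * (V * S)).trace = (Wᴴ * (V * (S * S))).trace := by
    rw [conjTranspose_mul, hS.eq, Matrix.mul_assoc, trace_mul_comm S, Matrix.mul_assoc,
      Matrix.mul_assoc]
  rw [conjTranspose_mul_mul_self_of_isometry hV hS, conjTranspose_mul_mul_self_of_isometry hW hS,
    hWV] at h
  linarith

end Matrix

theorem polar_factor_maximizes_real_trace_general (n r : ℕ)
    (X U : Matrix (Fin n) (Fin r) ℂ) (P : Matrix (Fin r) (Fin r) ℂ)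
    (hU : Uᴴ * U = 1) (hP : P.PosSemidef) (hX : X = U * P) :
    ∀ U' : Matrix (Fin n) (Fin r) ℂ, U'ᴴ * U' = 1 →
      ((U'ᴴ * X).trace).re ≤ ((Uᴴ * X).trace).re := by
  intro U' hU'
  rw [hX, ← Matrix.mul_assoc Uᴴ, hU, Matrix.one_mul]
  exact re_trace_conjTranspose_mul_mul_le hU hU' hP

/-- The real inner product `⟨X,Y⟩_ℝ = Re(trace(Xᴴ Y))`. The orthogonal polar
factor `U` of `X = U P` maximizes `Re(trace(U'ᴴ X))` over all `U'` with
orthonormal columns. -/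
theorem polar_factor_maximizes_real_trace (n r : ℕ) (hr : 1 ≤ r) (hrn : r ≤ n)
    (X U : Matrix (Fin n) (Fin r) ℂ) (P : Matrix (Fin r) (Fin r) ℂ)
    (hU : Uᴴ * U = 1) (hP : P.PosSemidef) (hX : X = U * P) :
    ∀ U' : Matrix (Fin n) (Fin r) ℂ, U'ᴴ * U' = 1 →
      ((U'ᴴ * X).trace).re ≤ ((Uᴴ * X).trace).re :=
  polar_factor_maximizes_real_trace_general n r X U P hU hP hX
end

section
/- Let X ∈ ℂ^{n×r} with 1 ≤ r ≤ n have polar decomposition X = U P with U^H U = I_r and P Hermitian positive semidefinite. Then U is a best approximation to X in Frobenius norm among matrices with orthonormal columns: for any U' with U'^H U' = I_r, ‖X − U‖_F ≤ ‖X − U'‖_F. -/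
/-!
For `VᴴV = 1` one has `‖X - V‖² = ‖X‖² + r - 2 Re tr (Vᴴ X)`, so it suffices to show that
`Re tr (Vᴴ X)` is largest at `V = U`, where it equals `tr P`. Writing `P = Sᴴ S`, the number
`tr (Vᴴ U P)` is the Frobenius inner product of `V Sᴴ` and `U Sᴴ`, two matrices of squared norm
`tr P`, so its real part is at most `tr P` by `2 Re ⟨A, B⟩ ≤ ‖A‖² + ‖B‖²`.
-/

open Matrix ComplexOrder

noncomputable def frobNorm {n r : ℕ} (X : Matrix (Fin n) (Fin r) ℂ) : ℝ :=
  Real.sqrt (∑ i, ∑ j, Complex.normSq (X i j))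

namespace Matrix

variable {m n 𝕜 : Type*} [Fintype m] [Fintype n] [RCLike 𝕜]

lemma re_trace_conjTranspose_mul_self_nonneg (A : Matrix m n 𝕜) :
    0 ≤ RCLike.re (Aᴴ * A).trace :=
  (RCLike.nonneg_iff.mp (posSemidef_conjTranspose_mul_self A).trace_nonneg).1

lemma re_trace_sub_conjTranspose_mul_sub (A B : Matrix m n 𝕜) :
    RCLike.re ((A - B)ᴴ * (A - B)).trace
      = RCLike.re (Aᴴ * A).trace + RCLike.re (Bᴴ * B).trace - 2 * RCLike.re (Bᴴ * A).trace := by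
  have hswap : (Aᴴ * B).trace = star (Bᴴ * A).trace := by
    rw [← trace_conjTranspose, conjTranspose_mul, conjTranspose_conjTranspose]
  simp only [conjTranspose_sub, Matrix.sub_mul, Matrix.mul_sub, trace_sub, map_sub, hswap,
    RCLike.star_def, RCLike.conj_re]
  ring

lemma conjTranspose_mul_self_of_isometry_mul {k : Type*} [DecidableEq n] {V : Matrix m n 𝕜}
    (hV : Vᴴ * V = 1) (S : Matrix n k 𝕜) : (V * S)ᴴ * (V * S) = Sᴴ * S := by
  rw [conjTranspose_mul, Matrix.mul_assoc, ← Matrix.mul_assoc Vᴴ, hV, Matrix.one_mul]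

open scoped MatrixOrder in
lemma re_trace_conjTranspose_mul_isometry_mul_le [DecidableEq n] {U V : Matrix m n 𝕜}
    (hU : Uᴴ * U = 1) (hV : Vᴴ * V = 1) {P : Matrix n n 𝕜} (hP : P.PosSemidef) :
    RCLike.re (Vᴴ * (U * P)).trace ≤ RCLike.re P.trace := by
  obtain ⟨S, rfl⟩ := CStarAlgebra.nonneg_iff_eq_star_mul_self.mp hP.nonneg
  have hinner : (Vᴴ * (U * (star S * S))).trace = ((V * Sᴴ)ᴴ * (U * Sᴴ)).trace := by
    rw [conjTranspose_mul, conjTranspose_conjTranspose, ← trace_mul_cycle, star_eq_conjTranspose]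
    simp only [Matrix.mul_assoc]
  have hSS : (Sᴴ * S).trace = (Sᴴᴴ * Sᴴ).trace := by
    rw [conjTranspose_conjTranspose, trace_mul_comm]
  have hinner_le := two_mul_re_trace_conjTranspose_mul_le (U * Sᴴ) (V * Sᴴ)
  rw [conjTranspose_mul_self_of_isometry_mul hU, conjTranspose_mul_self_of_isometry_mul hV,
    ← hSS] at hinner_le
  rw [hinner, star_eq_conjTranspose]
  linarith

end Matrix

lemma frobNorm_eq_sqrt_re_trace {n r : ℕ} (A : Matrix (Fin n) (Fin r) ℂ) :
    frobNorm A = Real.sqrt (RCLike.re (Aᴴ * A).trace) := by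
  rw [frobNorm, Finset.sum_comm]
  simp [trace, mul_apply, Complex.normSq_apply]

theorem polar_factor_best_orthonormal_approximation_general (n r : ℕ)
    (X U : Matrix (Fin n) (Fin r) ℂ) (P : Matrix (Fin r) (Fin r) ℂ)
    (hU : Uᴴ * U = 1) (hP : P.PosSemidef) (hX : X = U * P) :
    ∀ U' : Matrix (Fin n) (Fin r) ℂ, U'ᴴ * U' = 1 →
      frobNorm (X - U) ≤ frobNorm (X - U') := by
  intro U' hU'
  subst hX
  have hUX : Uᴴ * (U * P) = P := by rw [← Matrix.mul_assoc, hU, Matrix.one_mul]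
  have hU'X := re_trace_conjTranspose_mul_isometry_mul_le hU hU' hP
  rw [frobNorm_eq_sqrt_re_trace, frobNorm_eq_sqrt_re_trace]
  refine Real.sqrt_le_sqrt ?_
  rw [re_trace_sub_conjTranspose_mul_sub, re_trace_sub_conjTranspose_mul_sub, hU, hU', hUX]
  linarith

/-- The orthogonal polar factor `U` of `X = U P` is a best approximation to `X`
in Frobenius norm among matrices with orthonormal columns. -/
theorem polar_factor_best_orthonormal_approximation (n r : ℕ) (hr : 1 ≤ r) (hrn : r ≤ n)
    (X U : Matrix (Fin n) (Fin r) ℂ) (P : Matrix (Fin r) (Fin r) ℂ)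
    (hU : Uᴴ * U = 1) (hP : P.PosSemidef) (hX : X = U * P) :
    ∀ U' : Matrix (Fin n) (Fin r) ℂ, U'ᴴ * U' = 1 →
      frobNorm (X - U) ≤ frobNorm (X - U') :=
  polar_factor_best_orthonormal_approximation_general n r X U P hU hP hX
end

section
/- Let U, U' ∈ ℂ^{n×r} with U^H U = U'^H U' = I_r, and let P ∈ ℂ^{r×r} be Hermitian positive semidefinite with minimal eigenvalue σ_min(P) > 0. Then Re(trace((U − U')^H (U P))) ≥ (1/2) σ_min(P) ‖U − U'‖_F². -/
/-!
Put `D = U - U'`. Orthonormality of the columns gives `Dᴴ D = Dᴴ U + (Dᴴ U)ᴴ`, so for Hermitian `P`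
the real part of `tr (Dᴴ D P)` is twice `re tr (Dᴴ U P)`. On the other hand, for the least
eigenvalue `σ` of `P` the matrix `P - σ • 1` is positive semidefinite, hence
`re tr (Dᴴ D P) ≥ σ · tr (Dᴴ D) = σ ‖D‖_F²`.
-/

open Matrix ComplexOrder

theorem frobNorm_sq_eq_re_trace {n r : ℕ} (X : Matrix (Fin n) (Fin r) ℂ) :
    frobNorm X ^ 2 = (Xᴴ * X).trace.re := by
  have hsum : 0 ≤ ∑ i, ∑ j, Complex.normSq (X i j) :=
    Finset.sum_nonneg fun _ _ => Finset.sum_nonneg fun _ _ => Complex.normSq_nonneg _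
  rw [frobNorm, Real.sq_sqrt hsum, trace, Complex.re_sum, Finset.sum_comm]
  refine Finset.sum_congr rfl fun j _ => ?_
  simp only [diag_apply, mul_apply, Complex.re_sum, conjTranspose_apply, Complex.star_def,
    ← Complex.normSq_eq_conj_mul_self, Complex.ofReal_re]

namespace Matrix

variable {m n 𝕜 : Type*} [RCLike 𝕜] [Fintype m]

theorem conjTranspose_sub_mul_sub_of_orthonormal [DecidableEq n] {U U' : Matrix m n 𝕜}
    (hU : Uᴴ * U = 1) (hU' : U'ᴴ * U' = 1) :
    (U - U')ᴴ * (U - U') = (U - U')ᴴ * U + ((U - U')ᴴ * U)ᴴ := by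
  rw [conjTranspose_mul, conjTranspose_conjTranspose]
  simp only [conjTranspose_sub, Matrix.sub_mul, Matrix.mul_sub, hU, hU']
  abel

variable [Fintype n]

theorem IsHermitian.re_trace_conjTranspose_mul {P : Matrix n n 𝕜} (hP : P.IsHermitian)
    (A : Matrix n n 𝕜) : RCLike.re (Aᴴ * P).trace = RCLike.re (A * P).trace := by
  conv_lhs => rw [← hP.eq, ← conjTranspose_mul, trace_conjTranspose, trace_mul_comm]
  exact RCLike.conj_re _

theorem re_trace_conjTranspose_sub_mul_sub_mul [DecidableEq n] {U U' : Matrix m n 𝕜}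
    (hU : Uᴴ * U = 1) (hU' : U'ᴴ * U' = 1) {P : Matrix n n 𝕜} (hP : P.IsHermitian) :
    RCLike.re ((U - U')ᴴ * (U - U') * P).trace = 2 * RCLike.re ((U - U')ᴴ * (U * P)).trace := by
  rw [conjTranspose_sub_mul_sub_of_orthonormal hU hU', add_mul, trace_add, map_add,
    hP.re_trace_conjTranspose_mul, Matrix.mul_assoc]
  ring

theorem IsHermitian.posSemidef_sub_smul_one [DecidableEq n] {P : Matrix n n 𝕜}
    (hP : P.IsHermitian) {c : ℝ} (hc : ∀ i, c ≤ hP.eigenvalues i) :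
    (P - (c : 𝕜) • 1).PosSemidef := by
  open scoped MatrixOrder in
  have hcP : algebraMap ℝ (Matrix n n 𝕜) c ≤ P := by
    rw [algebraMap_le_iff_le_spectrum hP.isSelfAdjoint, hP.spectrum_real_eq_range_eigenvalues]
    rintro _ ⟨i, rfl⟩
    exact hc i
  rwa [le_iff, Algebra.algebraMap_eq_smul_one, RCLike.real_smul_eq_coe_smul (K := 𝕜)] at hcP

theorem IsHermitian.mul_re_trace_conjTranspose_mul_self_le [DecidableEq n] {P : Matrix n n 𝕜}
    (hP : P.IsHermitian) {c : ℝ} (hc : ∀ i, c ≤ hP.eigenvalues i) (D : Matrix m n 𝕜) :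
    c * RCLike.re (Dᴴ * D).trace ≤ RCLike.re (Dᴴ * D * P).trace := by
  have h := RCLike.nonneg_iff.1
    ((hP.posSemidef_sub_smul_one hc).mul_mul_conjTranspose_same D).trace_nonneg |>.1
  rw [trace_mul_comm, ← Matrix.mul_assoc, Matrix.mul_sub, Matrix.mul_smul, Matrix.mul_one,
    trace_sub, trace_smul, map_sub, smul_eq_mul, RCLike.re_ofReal_mul] at h
  linarith

end Matrix

theorem trace_lower_bound_of_posdef_general (n r : ℕ)
    (U U' : Matrix (Fin n) (Fin r) ℂ) (P : Matrix (Fin r) (Fin r) ℂ)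
    (hU : Uᴴ * U = 1) (hU' : U'ᴴ * U' = 1)
    (hPh : P.IsHermitian) :
    (1 / 2) * (⨅ p, hPh.eigenvalues p) * (frobNorm (U - U')) ^ 2 ≤
      (((U - U')ᴴ * (U * P)).trace).re := by
  have hσ : ∀ p, ⨅ p, hPh.eigenvalues p ≤ hPh.eigenvalues p :=
    ciInf_le (Set.finite_range _).bddBelow
  have key := hPh.mul_re_trace_conjTranspose_mul_self_le hσ (U - U')
  rw [re_trace_conjTranspose_sub_mul_sub_mul hU hU' hPh] at key
  rw [frobNorm_sq_eq_re_trace]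
  simp only [RCLike.re_to_complex] at key
  linarith

/-- If `U, U'` have orthonormal columns and `P` is Hermitian positive
semidefinite with minimal eigenvalue `σ > 0`, then
`Re(trace((U − U')ᴴ (U P))) ≥ (σ/2) ‖U − U'‖_F²`. -/
theorem trace_lower_bound_of_posdef (n r : ℕ)
    (U U' : Matrix (Fin n) (Fin r) ℂ) (P : Matrix (Fin r) (Fin r) ℂ)
    (hU : Uᴴ * U = 1) (hU' : U'ᴴ * U' = 1)
    (hPh : P.IsHermitian) (hP : P.PosSemidef)
    (hσ : 0 < ⨅ p, hPh.eigenvalues p) :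
    (1 / 2) * (⨅ p, hPh.eigenvalues p) * (frobNorm (U - U')) ^ 2 ≤
      (((U - U')ᴴ * (U * P)).trace).re :=
  trace_lower_bound_of_posdef_general n r U U' P hU hU' hPh
end

section
/- Let h : ℂ^{n×r} → ℝ be differentiable and U ∈ St(r,n,ℂ). If the Riemannian gradient of h at U vanishes (∇h(U) = U·sym(U^H ∇h(U))), then U^H ∇h(U) is Hermitian. If moreover ∇h(U) has full rank r and U^H ∇h(U) is positive semidefinite, then U is the (unique) orthogonal polar factor of ∇h(U). -/
open Matrix ComplexOrder

/-! Stationarity says `G = U * T` with `T = sym(Uᴴ G)` Hermitian, and `Uᴴ U = 1` turns this into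
`Uᴴ G = T`. If also `T ≥ 0`, then `U * T` is a polar decomposition of `G`. In any polar
decomposition `G = U₂ * P₂` the positive factor is the square root of `Gᴴ G`, so `P₂ = T`;
full rank of `G` makes `T` invertible, and cancelling it gives `U₂ = U`. -/

namespace Matrix

theorem isUnit_of_rank_eq_card {K n : Type*} [Field K] [Fintype n] [DecidableEq n]
    {A : Matrix n n K} (hA : A.rank = Fintype.card n) : IsUnit A := by
  rw [← mulVec_surjective_iff_isUnit]
  change Function.Surjective A.mulVecLin
  refine LinearMap.range_eq_top.mp (Submodule.eq_top_of_finrank_eq ?_)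
  rw [← rank, hA, Module.finrank_fintype_fun_eq_card]

variable {𝕜 m n : Type*} [RCLike 𝕜]

theorem isHermitian_half_smul_add_conjTranspose (A : Matrix n n 𝕜) :
    ((1 / 2 : 𝕜) • (A + Aᴴ)).IsHermitian := by
  simp [IsHermitian, conjTranspose_smul, conjTranspose_add, add_comm]

variable [Fintype m] [Fintype n] [DecidableEq n]

theorem conjTranspose_mul_mul_cancel {U : Matrix m n 𝕜} (hU : Uᴴ * U = 1) (T : Matrix n n 𝕜) :
    Uᴴ * (U * T) = T := by
  rw [← Matrix.mul_assoc, hU, Matrix.one_mul]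

theorem conjTranspose_mul_self_of_posSemidef {U : Matrix m n 𝕜} {P : Matrix n n 𝕜}
    (hU : Uᴴ * U = 1) (hP : P.PosSemidef) : (U * P)ᴴ * (U * P) = P ^ 2 := by
  rw [conjTranspose_mul, Matrix.mul_assoc, conjTranspose_mul_mul_cancel hU, hP.1.eq, sq]

open scoped MatrixOrder in
theorem posSemidef_factor_eq_of_mul_eq_mul {U₁ U₂ : Matrix m n 𝕜} {P₁ P₂ : Matrix n n 𝕜}
    (hU₁ : U₁ᴴ * U₁ = 1) (hU₂ : U₂ᴴ * U₂ = 1) (hP₁ : P₁.PosSemidef) (hP₂ : P₂.PosSemidef)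
    (h : U₁ * P₁ = U₂ * P₂) : P₁ = P₂ := by
  rw [← CFC.sq_eq_sq_iff P₁ P₂ hP₁.nonneg hP₂.nonneg,
    ← conjTranspose_mul_self_of_posSemidef hU₁ hP₁, h,
    conjTranspose_mul_self_of_posSemidef hU₂ hP₂]

theorem eq_of_mul_eq_mul_of_posSemidef {U₁ U₂ : Matrix m n 𝕜} {P₁ P₂ : Matrix n n 𝕜}
    (hU₁ : U₁ᴴ * U₁ = 1) (hU₂ : U₂ᴴ * U₂ = 1) (hP₁ : P₁.PosSemidef) (hP₂ : P₂.PosSemidef)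
    (hP₁_unit : IsUnit P₁) (h : U₁ * P₁ = U₂ * P₂) : U₁ = U₂ := by
  rw [← posSemidef_factor_eq_of_mul_eq_mul hU₁ hU₂ hP₁ hP₂ h] at h
  have hdet : IsUnit P₁.det := (isUnit_iff_isUnit_det P₁).mp hP₁_unit
  rw [← mul_nonsing_inv_cancel_right P₁ U₁ hdet, h, mul_nonsing_inv_cancel_right P₁ U₂ hdet]

end Matrix

theorem polar_factor_self_of_riemannianGrad_eq_zero_general (n r : ℕ)
    (U G : Matrix (Fin n) (Fin r) ℂ)
    (hU : Uᴴ * U = 1)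
    (hstat : G - U * ((1 / 2 : ℂ) • (Uᴴ * G + Gᴴ * U)) = 0) :
    (Uᴴ * G).IsHermitian ∧
      (G.rank = r → (Uᴴ * G).PosSemidef →
        ∀ (U₂ : Matrix (Fin n) (Fin r) ℂ) (P₂ : Matrix (Fin r) (Fin r) ℂ),
          G = U₂ * P₂ → U₂ᴴ * U₂ = 1 → P₂.PosSemidef → U₂ = U) := by
  obtain ⟨T, hT, hG⟩ : ∃ T : Matrix (Fin r) (Fin r) ℂ, T.IsHermitian ∧ G = U * T := by
    refine ⟨_, ?_, sub_eq_zero.mp hstat⟩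
    rw [← conjTranspose_conjTranspose U, ← conjTranspose_mul, conjTranspose_conjTranspose]
    exact isHermitian_half_smul_add_conjTranspose _
  have hUG : Uᴴ * G = T := by rw [hG, conjTranspose_mul_mul_cancel hU]
  refine ⟨hUG ▸ hT, ?_⟩
  intro hrank hpsd U₂ P₂ hG₂ hU₂ hP₂
  have hT_rank : T.rank = Fintype.card (Fin r) := by
    have hGT : G.rank ≤ T.rank := hG ▸ rank_mul_le_right U T
    exact le_antisymm (rank_le_card_width T) (by simpa [hrank] using hGT)
  rw [hUG] at hpsd
  exact (eq_of_mul_eq_mul_of_posSemidef hU hU₂ hpsd hP₂ (isUnit_of_rank_eq_card hT_rank)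
    (hG.symm.trans hG₂)).symm

/-- If the Riemannian gradient of `h` at a Stiefel point `U` vanishes, then
`Uᴴ ∇h(U)` is Hermitian; if moreover `∇h(U)` has full rank `r` and `Uᴴ ∇h(U)` is
positive semidefinite, then `U` is the (unique) orthogonal polar factor of `∇h(U)`. -/
theorem polar_factor_self_of_riemannianGrad_eq_zero (n r : ℕ)
    (h : Matrix (Fin n) (Fin r) ℂ → ℝ)
    (U G : Matrix (Fin n) (Fin r) ℂ)
    (hU : Uᴴ * U = 1)
    (hdiff : DifferentiableAt ℝ h U)
    (hgrad : ∀ Z, fderiv ℝ h U Z = ((Gᴴ * Z).trace).re)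
    (hstat : G - U * ((1 / 2 : ℂ) • (Uᴴ * G + Gᴴ * U)) = 0) :
    (Uᴴ * G).IsHermitian ∧
      (G.rank = r → (Uᴴ * G).PosSemidef →
        ∀ (U₂ : Matrix (Fin n) (Fin r) ℂ) (P₂ : Matrix (Fin r) (Fin r) ℂ),
          G = U₂ * P₂ → U₂ᴴ * U₂ = 1 → P₂.PosSemidef → U₂ = U) :=
  polar_factor_self_of_riemannianGrad_eq_zero_general n r U G hU hstat
end

section
/- Let h : ℂ^{n×r} → ℝ be differentiable, U ∈ St(r,n,ℂ), ∇h(U) ≠ 0, and let ∇h(U) = U_* P be a polar decomposition. Then ‖U_* − U‖_F ≥ ‖grad h(U)‖_F / ((r+1)·‖∇h(U)‖_F), where grad h(U) = ∇h(U) − U·sym(U^H ∇h(U)) is the Riemannian gradient. -/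
/-!
Write `D = U_* - U`. The tangent projection `X ↦ X - U sym(Uᴴ X)` is real-linear and kills `U P`
for Hermitian `P`, so `grad h(U)` is the projection of `∇h(U) - U P = D P`. Since `U` is an
isometry the projection at most doubles Frobenius norms, and `‖P‖_F = ‖∇h(U)‖_F` because `U_*` is
an isometry too. Hence `‖grad h(U)‖_F ≤ 2 ‖D‖_F ‖∇h(U)‖_F ≤ (r + 1) ‖D‖_F ‖∇h(U)‖_F`
(for `r = 0` every matrix involved vanishes).
-/

open Matrix

attribute [local instance] Matrix.frobeniusNormedAddCommGroup Matrix.frobeniusNormedSpace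
open ComplexOrder

lemma frobNorm_eq_norm {n r : ℕ} (X : Matrix (Fin n) (Fin r) ℂ) : frobNorm X = ‖X‖ := by
  rw [frobNorm, frobenius_norm_def, Real.sqrt_eq_rpow]
  simp only [Complex.normSq_eq_norm_sq, Real.rpow_two]

namespace Matrix

variable {𝕜 : Type*} [RCLike 𝕜] {l m n : Type*} [Fintype l] [Fintype m] [Fintype n]

theorem frobenius_norm_sq_eq_re_trace (A : Matrix m n 𝕜) :
    ‖A‖ ^ 2 = RCLike.re (Aᴴ * A).trace := by
  rw [frobenius_norm_def, ← Real.rpow_natCast, ← Real.rpow_mul (by positivity)]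
  norm_num
  simp only [trace, diag_apply, mul_apply, conjTranspose_apply, RCLike.star_def,
    RCLike.conj_mul, map_sum, Finset.sum_comm (γ := m)]
  norm_cast

/-- Tangent projection of the Stiefel manifold at `U`: applied to the Euclidean gradient `∇h(U)`
it gives the Riemannian gradient `grad h(U)`. -/
def stiefelProj (U X : Matrix m n 𝕜) : Matrix m n 𝕜 :=
  X - U * ((1 / 2 : 𝕜) • (Uᴴ * X + Xᴴ * U))

theorem stiefelProj_sub (U X Y : Matrix m n 𝕜) :
    stiefelProj U X - stiefelProj U Y = stiefelProj U (X - Y) := by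
  simp only [stiefelProj, conjTranspose_sub, Matrix.mul_sub, Matrix.sub_mul, smul_sub,
    smul_add, Matrix.mul_add]
  abel

variable [DecidableEq n] {U : Matrix m n 𝕜}

theorem frobenius_norm_mul_of_conjTranspose_mul_self_eq_one (hU : Uᴴ * U = 1)
    (X : Matrix n l 𝕜) : ‖U * X‖ = ‖X‖ := by
  have h : ‖U * X‖ ^ 2 = ‖X‖ ^ 2 := by
    rw [frobenius_norm_sq_eq_re_trace, frobenius_norm_sq_eq_re_trace, conjTranspose_mul,
      Matrix.mul_assoc, ← Matrix.mul_assoc Uᴴ, hU, Matrix.one_mul]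
  exact (pow_left_inj₀ (norm_nonneg _) (norm_nonneg _) two_ne_zero).mp h

theorem frobenius_norm_sq_eq_conjTranspose_mul_add (hU : Uᴴ * U = 1) (X : Matrix m l 𝕜) :
    ‖X‖ ^ 2 = ‖Uᴴ * X‖ ^ 2 + ‖X - U * (Uᴴ * X)‖ ^ 2 := by
  have hUU : Uᴴ * (U * (Uᴴ * X)) = Uᴴ * X := by rw [← Matrix.mul_assoc, hU, Matrix.one_mul]
  have hexp : (X - U * (Uᴴ * X))ᴴ * (X - U * (Uᴴ * X)) = Xᴴ * X - (Uᴴ * X)ᴴ * (Uᴴ * X) := by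
    simp only [conjTranspose_sub, conjTranspose_mul, conjTranspose_conjTranspose,
      Matrix.sub_mul, Matrix.mul_sub, Matrix.mul_assoc, hUU]
    abel
  rw [frobenius_norm_sq_eq_re_trace, frobenius_norm_sq_eq_re_trace,
    frobenius_norm_sq_eq_re_trace, hexp, trace_sub, map_sub]
  ring

theorem frobenius_norm_conjTranspose_mul_le (hU : Uᴴ * U = 1) (X : Matrix m l 𝕜) :
    ‖Uᴴ * X‖ ≤ ‖X‖ := by
  refine le_of_pow_le_pow_left₀ two_ne_zero (norm_nonneg _) ?_
  rw [frobenius_norm_sq_eq_conjTranspose_mul_add hU X]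
  exact le_add_of_nonneg_right (sq_nonneg _)

theorem stiefelProj_mul_of_isHermitian (hU : Uᴴ * U = 1) {P : Matrix n n 𝕜}
    (hP : P.IsHermitian) : stiefelProj U (U * P) = 0 := by
  rw [stiefelProj, conjTranspose_mul, hP.eq, ← Matrix.mul_assoc, hU, Matrix.one_mul,
    Matrix.mul_assoc, hU, Matrix.mul_one, ← two_smul 𝕜 P, smul_smul]
  norm_num

theorem frobenius_norm_stiefelProj_le (hU : Uᴴ * U = 1) (X : Matrix m n 𝕜) :
    ‖stiefelProj U X‖ ≤ 2 * ‖X‖ := by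
  have hUX := frobenius_norm_conjTranspose_mul_le hU X
  have hXU : ‖Xᴴ * U‖ = ‖Uᴴ * X‖ := by
    rw [← frobenius_norm_conjTranspose (Uᴴ * X), conjTranspose_mul, conjTranspose_conjTranspose]
  calc ‖stiefelProj U X‖ ≤ ‖X‖ + ‖(1 / 2 : 𝕜) • (Uᴴ * X + Xᴴ * U)‖ := by
        rw [stiefelProj, ← frobenius_norm_mul_of_conjTranspose_mul_self_eq_one hU
          ((1 / 2 : 𝕜) • (Uᴴ * X + Xᴴ * U))]
        exact norm_sub_le _ _
    _ ≤ ‖X‖ + 1 / 2 * (‖Uᴴ * X‖ + ‖Xᴴ * U‖) := by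
        rw [norm_smul, norm_div, norm_one, RCLike.norm_ofNat]
        gcongr
        exact norm_add_le _ _
    _ ≤ 2 * ‖X‖ := by linarith

end Matrix

theorem polar_factor_step_lower_bound_general (n r : ℕ)
    (U G Ustar : Matrix (Fin n) (Fin r) ℂ) (P : Matrix (Fin r) (Fin r) ℂ)
    (hU : Uᴴ * U = 1)
    (hUstar : Ustarᴴ * Ustar = 1) (hP : P.PosSemidef) (hpolar : G = Ustar * P) :
    frobNorm (G - U * ((1 / 2 : ℂ) • (Uᴴ * G + Gᴴ * U))) /
        ((r + 1) * frobNorm G) ≤ frobNorm (Ustar - U) := by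
  have hgrad : stiefelProj U G = stiefelProj U ((Ustar - U) * P) := by
    rw [Matrix.sub_mul, ← stiefelProj_sub, stiefelProj_mul_of_isHermitian hU hP.1, sub_zero,
      hpolar]
  have hPG : ‖P‖ = ‖G‖ := by
    rw [hpolar, frobenius_norm_mul_of_conjTranspose_mul_self_eq_one hUstar]
  have hscale : 2 * ‖G‖ ≤ (r + 1) * ‖G‖ := by
    rcases Nat.eq_zero_or_pos r with rfl | hr
    · simp [Subsingleton.elim G 0]
    · gcongr
      linarith [show (1 : ℝ) ≤ r by exact_mod_cast hr]
  rw [frobNorm_eq_norm, frobNorm_eq_norm, frobNorm_eq_norm]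
  refine div_le_of_le_mul₀ (by positivity) (norm_nonneg _) ?_
  calc ‖stiefelProj U G‖ ≤ 2 * ‖(Ustar - U) * P‖ := by
        rw [hgrad]; exact frobenius_norm_stiefelProj_le hU _
    _ ≤ 2 * (‖Ustar - U‖ * ‖G‖) := by
        rw [← hPG]; gcongr; exact frobenius_norm_mul _ _
    _ ≤ ‖Ustar - U‖ * ((r + 1) * ‖G‖) := by nlinarith [norm_nonneg (Ustar - U)]

/-- If `∇h(U) ≠ 0` and `∇h(U) = U_* P` is a polar decomposition, then
`‖U_* − U‖_F ≥ ‖grad h(U)‖_F / ((r+1)‖∇h(U)‖_F)`, where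
`grad h(U) = ∇h(U) − U·sym(Uᴴ ∇h(U))` is the Riemannian gradient. -/
theorem polar_factor_step_lower_bound (n r : ℕ)
    (h : Matrix (Fin n) (Fin r) ℂ → ℝ)
    (U G Ustar : Matrix (Fin n) (Fin r) ℂ) (P : Matrix (Fin r) (Fin r) ℂ)
    (hU : Uᴴ * U = 1)
    (hdiff : DifferentiableAt ℝ h U)
    (hgrad : ∀ Z, fderiv ℝ h U Z = ((Gᴴ * Z).trace).re)
    (hG : G ≠ 0)
    (hUstar : Ustarᴴ * Ustar = 1) (hP : P.PosSemidef) (hpolar : G = Ustar * P) :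
    frobNorm (G - U * ((1 / 2 : ℂ) • (Uᴴ * G + Gᴴ * U))) /
        ((r + 1) * frobNorm G) ≤ frobNorm (Ustar - U) :=
  polar_factor_step_lower_bound_general n r U G Ustar P hU hUstar hP hpolar
end

section
/- Let f : M → ℝ be a C¹ function on a Riemannian submanifold M ⊆ ℝ^n, and let {x_k} ⊆ M be a sequence such that for large k: (i) f(x_{k+1}) − f(x_k) ≥ σ‖grad f(x_k)‖·‖x_{k+1} − x_k‖ for some σ > 0, and (ii) x_{k+1} = x_k whenever f(x_{k+1}) = f(x_k). Suppose f is bounded above and the sequence {f(x_k)} is monotonically increasing, and suppose x_* is an accumulation point of {x_k} at which f satisfies a Łojasiewicz gradient inequality |f(y) − f(x_*)|^{1−ζ} ≤ c‖grad f(y)‖ in a neighborhood of x_* for some c > 0, ζ ∈ (0,1/2]. Then Σ_k ‖x_{k+1} − x_k‖ < ∞ and x_k → x_*. -/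
/-!
Let `L = sup f(x_k)` and `e_k = L - f(x_k)`, which decreases to `0`. For large `k` we have
`e_k ≤ |f(x_k) - f(x_*)|`: trivially if `f(x_*) = L`, and because `e_k → 0` otherwise.
Hence near `x_*` the ascent condition and the Łojasiewicz inequality combine, through the
concavity of `t ↦ t ^ ζ`, into the telescoping bound
`‖x_{k+1} - x_k‖ ≤ c / (σ ζ) (e_k ^ ζ - e_{k+1} ^ ζ)`.
Once an iterate is close to `x_*` with `e_k` small, this bound keeps all later iterates in the
Łojasiewicz neighbourhood, so the steps are summable, the sequence is Cauchy, and it converges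
to its cluster point `x_*`.
-/

open Filter Topology

theorem summable_of_le_sub_succ {d h : ℕ → ℝ} (hd : ∀ k, 0 ≤ d k) (hh : ∀ k, 0 ≤ h k)
    {K : ℕ} (hle : ∀ k ≥ K, d k ≤ h k - h (k + 1)) : Summable d := by
  rw [← summable_nat_add_iff K]
  refine summable_of_sum_range_le (c := h K) (fun k => hd _) fun m => ?_
  calc ∑ i ∈ Finset.range m, d (i + K)
      ≤ ∑ i ∈ Finset.range m, (h (i + K) - h (i + 1 + K)) :=
        Finset.sum_le_sum fun i _ => by
          rw [add_right_comm]; exact hle _ (Nat.le_add_left K i)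
    _ = h K - h (m + K) := by rw [Finset.sum_range_sub' (fun i => h (i + K)), zero_add]
    _ ≤ h K := sub_le_self _ (hh _)

theorem dist_le_sub_of_dist_succ_le {α : Type*} [PseudoMetricSpace α] {x : ℕ → α}
    {h : ℕ → ℝ} {m n : ℕ} (hmn : m ≤ n)
    (hle : ∀ k, m ≤ k → k < n → dist (x k) (x (k + 1)) ≤ h k - h (k + 1)) :
    dist (x m) (x n) ≤ h m - h n := by
  calc dist (x m) (x n) ≤ ∑ i ∈ Finset.Ico m n, (h i - h (i + 1)) :=
        dist_le_Ico_sum_of_dist_le hmn fun hmk hkn => hle _ hmk hkn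
    _ = h m - h n := by
        rw [← neg_sub, ← Finset.sum_Ico_sub h hmn, ← Finset.sum_neg_distrib]
        simp only [neg_sub]

theorem eventually_abs_sub_le_abs_sub {ι : Type*} {l : Filter ι} {u : ι → ℝ} {L : ℝ}
    (hu : Tendsto u l (𝓝 L)) (v : ℝ) : ∀ᶠ i in l, |L - u i| ≤ |u i - v| := by
  rcases eq_or_ne v L with rfl | hv
  · exact Eventually.of_forall fun i => (abs_sub_comm _ _).le
  have hδ : 0 < |L - v| := abs_pos.2 (sub_ne_zero.2 hv.symm)
  filter_upwards [Metric.tendsto_nhds.1 hu _ (half_pos hδ)] with i hi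
  rw [Real.dist_eq, abs_sub_comm] at hi
  linarith [abs_sub_le L (u i) v]

theorem mul_sub_le_rpow_mul_sub_rpow {a b ζ : ℝ} (ha : 0 ≤ a) (hb : 0 ≤ b) (hζ0 : 0 ≤ ζ)
    (hζ1 : ζ ≤ 1) : ζ * (a - b) ≤ a ^ (1 - ζ) * (a ^ ζ - b ^ ζ) := by
  have hamgm : a ^ (1 - ζ) * b ^ ζ ≤ (1 - ζ) * a + ζ * b :=
    Real.geom_mean_le_arith_mean2_weighted (by linarith) hζ0 ha hb (by ring)
  have hsplit : a ^ (1 - ζ) * a ^ ζ = a := by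
    rw [← Real.rpow_add' ha (by norm_num), sub_add_cancel, Real.rpow_one]
  linarith

theorem step_le_of_ascent_of_lojasiewicz {a b d g σ c ζ : ℝ} (hσ : 0 < σ) (hc : 0 < c)
    (hζ0 : 0 < ζ) (hζ1 : ζ ≤ 1) (hb : 0 ≤ b) (hba : b ≤ a) (hd : 0 ≤ d)
    (hstall : b = a → d = 0) (hascent : σ * g * d ≤ a - b) (hloj : a ^ (1 - ζ) ≤ c * g) :
    d ≤ c / (σ * ζ) * (a ^ ζ - b ^ ζ) := by
  rcases hba.eq_or_lt with rfl | hba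
  · simp [hstall rfl]
  have ha : 0 < a ^ (1 - ζ) := Real.rpow_pos_of_pos (hb.trans_lt hba) _
  have key : σ * ζ * d * a ^ (1 - ζ) ≤ c * (a ^ ζ - b ^ ζ) * a ^ (1 - ζ) :=
    calc σ * ζ * d * a ^ (1 - ζ) ≤ σ * ζ * d * (c * g) := by gcongr
      _ = c * ζ * (σ * g * d) := by ring
      _ ≤ c * (ζ * (a - b)) := by rw [mul_assoc]; gcongr
      _ ≤ c * (a ^ (1 - ζ) * (a ^ ζ - b ^ ζ)) := mul_le_mul_of_nonneg_left
          (mul_sub_le_rpow_mul_sub_rpow (hb.trans hba.le) hb hζ0.le hζ1) hc.le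
      _ = c * (a ^ ζ - b ^ ζ) * a ^ (1 - ζ) := by ring
  rw [div_mul_eq_mul_div, le_div_iff₀ (by positivity)]
  linarith [le_of_mul_le_mul_right key ha]

theorem summable_dist_and_tendsto_of_dist_succ_le {α : Type*} [PseudoMetricSpace α]
    {x : ℕ → α} {a : α} (hacc : MapClusterPt a atTop x) {h : ℕ → ℝ} (hh : ∀ k, 0 ≤ h k)
    (hlim : Tendsto h atTop (𝓝 0)) {r : ℝ} (hr : 0 < r) {K : ℕ}
    (hstep : ∀ k ≥ K, dist (x k) a < r → dist (x k) (x (k + 1)) ≤ h k - h (k + 1)) :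
    Summable (fun k => dist (x k) (x (k + 1))) ∧ Tendsto x atTop (𝓝 a) := by
  have hnear : ∃ᶠ k in atTop, dist (x k) a < r / 2 :=
    mapClusterPt_iff_frequently.1 hacc _ (Metric.ball_mem_nhds a (half_pos hr))
  obtain ⟨K', hK'a, hK'K, hK'h⟩ : ∃ K', dist (x K') a < r / 2 ∧ K ≤ K' ∧ h K' < r / 2 :=
    (hnear.and_eventually
      ((eventually_ge_atTop K).and (hlim.eventually (gt_mem_nhds (half_pos hr))))).exists
  -- Once `x` is within `r / 2` of `a` and `h < r / 2`, the total remaining path length is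
  -- below `r / 2`, so the iterates can never leave the ball where `hstep` applies.
  have htrap : ∀ k ≥ K', dist (x k) a < r := by
    intro k
    induction k using Nat.strong_induction_on with
    | _ k ih =>
      intro hk
      have hpath : dist (x K') (x k) ≤ h K' - h k := dist_le_sub_of_dist_succ_le hk
        fun j hj hjk => hstep j (hK'K.trans hj) (ih j hjk hj)
      linarith [dist_triangle_left (x k) a (x K'), hh k]
  have hsum : Summable fun k => dist (x k) (x (k + 1)) :=
    summable_of_le_sub_succ (fun _ => dist_nonneg) hh fun k hk =>
      hstep k (hK'K.trans hk) (htrap k hk)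
  exact ⟨hsum, le_nhds_of_cauchy_adhp (cauchySeq_of_summable_dist hsum) hacc⟩

/-- Łojasiewicz-type convergence theorem (Schneider–Uschmajew): if a sequence
`x_k` in a submanifold `M ⊆ ℝⁿ` satisfies, for large `k`, the sufficient ascent
condition `f(x_{k+1}) − f(x_k) ≥ σ‖grad f(x_k)‖·‖x_{k+1} − x_k‖` and the
condition that equal consecutive values force equal iterates; if `f` is bounded
above on `M` and `f(x_k)` is monotonically increasing; and if `x_*` is an
accumulation point at which a Łojasiewicz gradient inequality
`|f(y) − f(x_*)|^{1−ζ} ≤ c‖grad f(y)‖` holds near `x_*`, then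
`Σ_k ‖x_{k+1} − x_k‖ < ∞` and `x_k → x_*`. -/
theorem lojasiewicz_convergence (n : ℕ) (M : Set (EuclideanSpace ℝ (Fin n)))
    (f : EuclideanSpace ℝ (Fin n) → ℝ)
    (gradf : EuclideanSpace ℝ (Fin n) → EuclideanSpace ℝ (Fin n))
    (x : ℕ → EuclideanSpace ℝ (Fin n)) (hxM : ∀ k, x k ∈ M)
    (σ : ℝ) (hσ : 0 < σ) (N : ℕ)
    (hdescent : ∀ k ≥ N,
      σ * ‖gradf (x k)‖ * ‖x (k + 1) - x k‖ ≤ f (x (k + 1)) - f (x k))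
    (hstall : ∀ k ≥ N, f (x (k + 1)) = f (x k) → x (k + 1) = x k)
    (hbdd : BddAbove (f '' M))
    (hmono : Monotone fun k => f (x k))
    (xstar : EuclideanSpace ℝ (Fin n))
    (hacc : MapClusterPt xstar atTop x)
    (c : ℝ) (hc : 0 < c) (ζ : ℝ) (hζ : ζ ∈ Set.Ioc (0 : ℝ) (1 / 2))
    (𝒰 : Set (EuclideanSpace ℝ (Fin n))) (h𝒰 : 𝒰 ∈ nhds xstar)
    (hloj : ∀ y ∈ 𝒰 ∩ M, |f y - f xstar| ^ (1 - ζ) ≤ c * ‖gradf y‖) :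
    Summable (fun k => ‖x (k + 1) - x k‖) ∧
      Tendsto x atTop (nhds xstar) := by
  obtain ⟨hζ0, hζ1⟩ := hζ
  have hbdd' : BddAbove (Set.range fun k => f (x k)) :=
    hbdd.mono (Set.range_subset_iff.2 fun k => Set.mem_image_of_mem f (hxM k))
  set L := ⨆ k, f (x k)
  have hlim : Tendsto (fun k => f (x k)) atTop (𝓝 L) := tendsto_atTop_ciSup hmono hbdd'
  have hgap : ∀ k, 0 ≤ L - f (x k) := fun k => sub_nonneg.2 (le_ciSup hbdd' k)
  have hgap_lim : Tendsto (fun k => c / (σ * ζ) * (L - f (x k)) ^ ζ) atTop (𝓝 0) := by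
    have hgap_zero : Tendsto (fun k => L - f (x k)) atTop (𝓝 0) := by
      simpa using (tendsto_const_nhds (x := L)).sub hlim
    simpa using (hgap_zero.rpow_const_nhds_zero hζ0).const_mul (c / (σ * ζ))
  obtain ⟨r, hr, hball⟩ := Metric.mem_nhds_iff.1 h𝒰
  obtain ⟨K, hK⟩ := eventually_atTop.1
    ((eventually_ge_atTop N).and (eventually_abs_sub_le_abs_sub hlim (f xstar)))
  simp only [← dist_eq_norm']
  refine summable_dist_and_tendsto_of_dist_succ_le hacc
    (fun k => mul_nonneg (by positivity) (Real.rpow_nonneg (hgap k) ζ)) hgap_lim hr (K := K)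
    fun k hk hdist => ?_
  obtain ⟨hkN, hk_gap⟩ := hK k hk
  rw [← mul_sub, dist_eq_norm']
  refine step_le_of_ascent_of_lojasiewicz (g := ‖gradf (x k)‖) hσ hc hζ0 (by linarith)
    (hgap (k + 1)) (by linarith [hmono k.le_succ]) (norm_nonneg _)
    (fun h => by rw [hstall k hkN (by linarith), sub_self, norm_zero])
    (by linarith [hdescent k hkN]) ?_
  rw [abs_of_nonneg (hgap k)] at hk_gap
  exact (Real.rpow_le_rpow (hgap k) hk_gap (by linarith)).trans
    (hloj _ ⟨hball (Metric.mem_ball.2 hdist), hxM k⟩)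
end
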